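/- Let K̃_{n,q} be the Dunkl q-Szász-Mirakjan-Kantorovich-Stancu operator. Then for every n ∈ ℕ⁺, 0<q<1, μ>1/2, α,β ≥ 0 and x ≥ 0, applying K̃_{n,q} to the function t ↦ t−1 gives K̃_{n,q}(t−1;x) = (n/(n+β))·(α/n + 1/([2]_q[n]_q) − (n+β)/n) + (2nq/([2]_q(n+β)))·x. -/
import Mathlib


/-- The `q`-number `[x]_q = (1 - q^x)/(1 - q)` for a real exponent `x`. -/
noncomputable def qNum (q x : ℝ) : ℝ := (1 - q ^ x) / (1 - q)

/-- `θ_k = 0` if `k` is even and `1` if `k` is odd. -/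
def theta (k : ℕ) : ℕ := if Even k then 0 else 1

/-- The Dunkl `q`-gamma coefficients: `γ_{μ,q}(0) = 1`,
`γ_{μ,q}(k+1) = [2μθ_{k+1} + k + 1]_q ⬝ γ_{μ,q}(k)`. -/
noncomputable def gammaD (mu q : ℝ) : ℕ → ℝ
  | 0 => 1
  | k + 1 => qNum q (2 * mu * (theta (k + 1) : ℝ) + ((k : ℝ) + 1)) * gammaD mu q k

/-- The Dunkl `q`-exponential `E_{μ,q}(x) = Σ q^{k(k-1)/2} x^k / γ_{μ,q}(k)`. -/
noncomputable def EDunkl (mu q x : ℝ) : ℝ :=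
  ∑' k : ℕ, q ^ (k * (k - 1) / 2) * x ^ k / gammaD mu q k

/-- The Jackson `q`-integral `∫_a^b f(t) d_q t`. -/
noncomputable def jacksonInt (q : ℝ) (f : ℝ → ℝ) (a b : ℝ) : ℝ :=
  (1 - q) * (b * ∑' j : ℕ, q ^ j * f (b * q ^ j) - a * ∑' j : ℕ, q ^ j * f (a * q ^ j))

/-- Lower endpoint `[k + 2μθ_k]_q / (q^{k-2} [n]_q)`. -/
noncomputable def lowB (q mu : ℝ) (n k : ℕ) : ℝ :=
  qNum q ((k : ℝ) + 2 * mu * (theta k : ℝ)) / (q ^ ((k : ℝ) - 2) * qNum q (n : ℝ))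

/-- Upper endpoint `([k + 1 + 2μθ_k]_q - 1) / (q^{k-1} [n]_q) + 1/[n]_q`. -/
noncomputable def uppB (q mu : ℝ) (n k : ℕ) : ℝ :=
  (qNum q ((k : ℝ) + 1 + 2 * mu * (theta k : ℝ)) - 1) / (q ^ ((k : ℝ) - 1) * qNum q (n : ℝ))
    + 1 / qNum q (n : ℝ)

/-- The Dunkl `q`-Szász-Mirakjan-Kantorovich-Stancu operator `K̃_{n,q}(f;x)`. -/
noncomputable def KT (n : ℕ) (q mu α β : ℝ) (f : ℝ → ℝ) (x : ℝ) : ℝ :=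
  qNum q (n : ℝ) / EDunkl mu q (qNum q (n : ℝ) * x) *
    ∑' k : ℕ, (qNum q (n : ℝ) * x) ^ k / gammaD mu q k * q ^ (k * (k - 1) / 2) *
      jacksonInt q (fun t => f (((n : ℝ) * t + α) / ((n : ℝ) + β))) (lowB q mu n k) (uppB q mu n k)

/- ### Auxiliary lemmas -/

lemma qNum_ge_one {q : ℝ} (hq0 : 0 < q) (hq1 : q < 1) {e : ℝ} (he : 1 ≤ e) : 1 ≤ qNum q e := by
  unfold qNum
  rw [le_div_iff₀ (by linarith)]
  have h := Real.rpow_le_rpow_of_exponent_ge hq0 hq1.le he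
  rw [Real.rpow_one] at h
  linarith

lemma qNum_zero {q : ℝ} : qNum q 0 = 0 := by
  unfold qNum
  rw [Real.rpow_zero]
  simp

lemma qNum_two {q : ℝ} (hq1 : q < 1) : qNum q 2 = 1 + q := by
  unfold qNum
  rw [show (2 : ℝ) = ((2 : ℕ) : ℝ) by norm_num, Real.rpow_natCast]
  have h : 1 - q ≠ 0 := by linarith
  field_simp
  ring

lemma gammaD_ge_one {q mu : ℝ} (hq0 : 0 < q) (hq1 : q < 1) (hmu : 1 / 2 < mu) :
    ∀ k, 1 ≤ gammaD mu q k
  | 0 => le_refl 1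
  | (k + 1) => by
    have h1 := gammaD_ge_one hq0 hq1 hmu k
    have hθ : (0 : ℝ) ≤ ((theta (k + 1) : ℕ) : ℝ) := Nat.cast_nonneg _
    have hk : (0 : ℝ) ≤ (k : ℝ) := Nat.cast_nonneg _
    have h2 : 1 ≤ qNum q (2 * mu * (theta (k + 1) : ℝ) + ((k : ℝ) + 1)) :=
      qNum_ge_one hq0 hq1 (by nlinarith)
    calc (1 : ℝ) = 1 * 1 := by ring
    _ ≤ _ := mul_le_mul h2 h1 one_pos.le (by linarith)

lemma gammaD_pos {q mu : ℝ} (hq0 : 0 < q) (hq1 : q < 1) (hmu : 1 / 2 < mu) (k : ℕ) :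
    0 < gammaD mu q k :=
  lt_of_lt_of_le one_pos (gammaD_ge_one hq0 hq1 hmu k)

/-- The generic term of the Dunkl `q`-exponential series. -/
noncomputable def gTerm (mu q y : ℝ) (k : ℕ) : ℝ :=
  q ^ (k * (k - 1) / 2) * y ^ k / gammaD mu q k

lemma gTerm_nonneg {q mu : ℝ} (hq0 : 0 < q) (hq1 : q < 1) (hmu : 1 / 2 < mu)
    {y : ℝ} (hy : 0 ≤ y) (k : ℕ) : 0 ≤ gTerm mu q y k :=
  div_nonneg (mul_nonneg (pow_nonneg hq0.le _) (pow_nonneg hy _))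
    (gammaD_pos hq0 hq1 hmu k).le

lemma gTerm_succ {q mu : ℝ} (hq0 : 0 < q) (hq1 : q < 1) (hmu : 1 / 2 < mu) (y : ℝ) (k : ℕ) :
    gTerm mu q y (k + 1)
      = q ^ k * y / qNum q (2 * mu * (theta (k + 1) : ℝ) + ((k : ℝ) + 1)) * gTerm mu q y k := by
  have hQ : (1 : ℝ) ≤ qNum q (2 * mu * (theta (k + 1) : ℝ) + ((k : ℝ) + 1)) := by
    have hθ : (0 : ℝ) ≤ ((theta (k + 1) : ℕ) : ℝ) := Nat.cast_nonneg _
    have hk : (0 : ℝ) ≤ (k : ℝ) := Nat.cast_nonneg _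
    exact qNum_ge_one hq0 hq1 (by nlinarith)
  have hQ0 : qNum q (2 * mu * (theta (k + 1) : ℝ) + ((k : ℝ) + 1)) ≠ 0 := by linarith
  have hγ : gammaD mu q k ≠ 0 := (gammaD_pos hq0 hq1 hmu k).ne'
  unfold gTerm
  rw [show gammaD mu q (k + 1)
      = qNum q (2 * mu * (theta (k + 1) : ℝ) + ((k : ℝ) + 1)) * gammaD mu q k from rfl,
    Nat.triangle_succ, pow_add]
  field_simp
  ring

lemma summable_gTerm {q mu : ℝ} (hq0 : 0 < q) (hq1 : q < 1) (hmu : 1 / 2 < mu)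
    {y : ℝ} (hy : 0 ≤ y) : Summable (gTerm mu q y) := by
  apply summable_of_ratio_norm_eventually_le (r := 1 / 2) (by norm_num)
  have htend : Filter.Tendsto (fun k : ℕ => q ^ k * y) Filter.atTop (nhds 0) := by
    simpa using (tendsto_pow_atTop_nhds_zero_of_lt_one hq0.le hq1).mul_const y
  filter_upwards [htend.eventually_lt_const (by norm_num : (0 : ℝ) < 1 / 2)] with k hk
  have hg0 := gTerm_nonneg hq0 hq1 hmu hy k
  have hg1 := gTerm_nonneg hq0 hq1 hmu hy (k + 1)
  rw [Real.norm_of_nonneg hg1, Real.norm_of_nonneg hg0]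
  have hQ : (1 : ℝ) ≤ qNum q (2 * mu * (theta (k + 1) : ℝ) + ((k : ℝ) + 1)) := by
    have hθ : (0 : ℝ) ≤ ((theta (k + 1) : ℕ) : ℝ) := Nat.cast_nonneg _
    have hk' : (0 : ℝ) ≤ (k : ℝ) := Nat.cast_nonneg _
    exact qNum_ge_one hq0 hq1 (by nlinarith)
  calc gTerm mu q y (k + 1)
      = q ^ k * y / qNum q (2 * mu * (theta (k + 1) : ℝ) + ((k : ℝ) + 1)) * gTerm mu q y k :=
        gTerm_succ hq0 hq1 hmu y k
    _ ≤ 1 / 2 * gTerm mu q y k := by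
        apply mul_le_mul_of_nonneg_right _ hg0
        calc q ^ k * y / qNum q (2 * mu * (theta (k + 1) : ℝ) + ((k : ℝ) + 1))
            ≤ q ^ k * y := div_le_self (mul_nonneg (pow_nonneg hq0.le _) hy) hQ
          _ ≤ 1 / 2 := hk.le

lemma one_le_tsum_gTerm {q mu : ℝ} (hq0 : 0 < q) (hq1 : q < 1) (hmu : 1 / 2 < mu)
    {y : ℝ} (hy : 0 ≤ y) : 1 ≤ ∑' k, gTerm mu q y k := by
  have h0 : gTerm mu q y 0 = 1 := by simp [gTerm, gammaD]
  calc (1 : ℝ) = gTerm mu q y 0 := h0.symm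
    _ ≤ _ := Summable.le_tsum (summable_gTerm hq0 hq1 hmu hy) 0
        (fun j _ => gTerm_nonneg hq0 hq1 hmu hy j)

lemma lowB_zero {q : ℝ} (mu : ℝ) (n : ℕ) : lowB q mu n 0 = 0 := by
  unfold lowB
  rw [show ((0 : ℕ) : ℝ) + 2 * mu * ((theta 0 : ℕ) : ℝ) = 0 by simp [theta], qNum_zero, zero_div]

lemma gTerm_mul_lowB {q mu : ℝ} (hq0 : 0 < q) (hq1 : q < 1) (hmu : 1 / 2 < mu)
    {n : ℕ} (hN : qNum q (n : ℝ) ≠ 0) (y : ℝ) (k : ℕ) :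
    gTerm mu q y k * lowB q mu n k
      = if k = 0 then 0 else q * y / qNum q (n : ℝ) * gTerm mu q y (k - 1) := by
  cases k with
  | zero => rw [if_pos rfl, lowB_zero, mul_zero]
  | succ k =>
    rw [if_neg (Nat.succ_ne_zero k), Nat.add_sub_cancel]
    have hQ : (1 : ℝ) ≤ qNum q (2 * mu * (theta (k + 1) : ℝ) + ((k : ℝ) + 1)) := by
      have hθ : (0 : ℝ) ≤ ((theta (k + 1) : ℕ) : ℝ) := Nat.cast_nonneg _
      have hk : (0 : ℝ) ≤ (k : ℝ) := Nat.cast_nonneg _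
      exact qNum_ge_one hq0 hq1 (by nlinarith)
    have hQ0 : qNum q (2 * mu * (theta (k + 1) : ℝ) + ((k : ℝ) + 1)) ≠ 0 := by linarith
    have hγ : gammaD mu q k ≠ 0 := (gammaD_pos hq0 hq1 hmu k).ne'
    have hqk : q ^ k ≠ 0 := pow_ne_zero _ hq0.ne'
    unfold gTerm lowB
    rw [show ((k + 1 : ℕ) : ℝ) + 2 * mu * ((theta (k + 1) : ℕ) : ℝ)
        = 2 * mu * ((theta (k + 1) : ℕ) : ℝ) + ((k : ℝ) + 1) by push_cast; ring]
    rw [show gammaD mu q (k + 1)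
        = qNum q (2 * mu * (theta (k + 1) : ℝ) + ((k : ℝ) + 1)) * gammaD mu q k from rfl]
    rw [Nat.triangle_succ, pow_add]
    rw [show ((k + 1 : ℕ) : ℝ) - 2 = (k : ℝ) - 1 by push_cast; ring]
    rw [Real.rpow_sub hq0, Real.rpow_one, Real.rpow_natCast]
    field_simp
    ring

lemma jackson_affine {q : ℝ} (hq0 : 0 < q) (hq1 : q < 1) (c d a b : ℝ) :
    jacksonInt q (fun t => c * t + d) a b
      = c * (b ^ 2 - a ^ 2) / (1 + q) + d * (b - a) := by
  have hq2 : q ^ 2 < 1 := by nlinarith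
  have key : ∀ u : ℝ, (∑' j : ℕ, q ^ j * (c * (u * q ^ j) + d))
      = c * u / (1 - q ^ 2) + d / (1 - q) := by
    intro u
    have h2 : Summable (fun j : ℕ => (q ^ 2) ^ j) :=
      summable_geometric_of_lt_one (by positivity) hq2
    have h1 : Summable (fun j : ℕ => q ^ j) := summable_geometric_of_lt_one hq0.le hq1
    have e1 : (fun j : ℕ => q ^ j * (c * (u * q ^ j) + d))
        = fun j => c * u * (q ^ 2) ^ j + d * q ^ j := by
      funext j
      rw [show ((q ^ 2 : ℝ)) ^ j = q ^ j * q ^ j by rw [← pow_mul, two_mul, pow_add]]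
      ring
    rw [e1, Summable.tsum_add (h2.mul_left _) (h1.mul_left _), tsum_mul_left, tsum_mul_left,
      tsum_geometric_of_lt_one (by positivity) hq2, tsum_geometric_of_lt_one hq0.le hq1,
      inv_eq_one_div, inv_eq_one_div]
    ring
  show (1 - q) * (b * (∑' j : ℕ, q ^ j * (c * (b * q ^ j) + d))
      - a * (∑' j : ℕ, q ^ j * (c * (a * q ^ j) + d))) = _
  rw [key, key]
  have h1 : (1 : ℝ) - q ≠ 0 := by linarith
  have h2 : (1 : ℝ) + q ≠ 0 := by linarith
  have h3 : (1 : ℝ) - q ^ 2 ≠ 0 := by nlinarith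
  field_simp
  ring

lemma upp_eq {q mu : ℝ} (hq0 : 0 < q) {n : ℕ} (hN : qNum q (n : ℝ) ≠ 0) (hq1 : q < 1) (k : ℕ) :
    uppB q mu n k = lowB q mu n k + 1 / qNum q (n : ℝ) := by
  have hnum : qNum q ((k : ℝ) + 1 + 2 * mu * (theta k : ℝ)) - 1
      = q * qNum q ((k : ℝ) + 2 * mu * (theta k : ℝ)) := by
    unfold qNum
    rw [show (k : ℝ) + 1 + 2 * mu * (theta k : ℝ) = 1 + ((k : ℝ) + 2 * mu * (theta k : ℝ)) by ring,
      Real.rpow_add hq0, Real.rpow_one]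
    have h1 : (1 : ℝ) - q ≠ 0 := by linarith
    field_simp
    ring
  have h2 : q ^ ((k : ℝ) - 1) = q * q ^ ((k : ℝ) - 2) := by
    rw [show (k : ℝ) - 1 = 1 + ((k : ℝ) - 2) by ring, Real.rpow_add hq0, Real.rpow_one]
  unfold uppB lowB
  rw [hnum, h2]
  have hA : q ^ ((k : ℝ) - 2) ≠ 0 := (Real.rpow_pos_of_pos hq0 _).ne'
  field_simp

lemma tsum_FC {mu q y N : ℝ} (hq0 : 0 < q) (hq1 : q < 1) (hmu : 1 / 2 < mu) (hy : 0 ≤ y)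
    (C1 C2 : ℝ) :
    (∑' k : ℕ, (C1 * (if k = 0 then 0 else q * y / N * gTerm mu q y (k - 1))
        + C2 * gTerm mu q y k))
      = C1 * (q * y / N * ∑' k, gTerm mu q y k) + C2 * ∑' k, gTerm mu q y k := by
  have hg := summable_gTerm hq0 hq1 hmu hy
  have hFs : Summable (fun k : ℕ =>
      if k = 0 then (0 : ℝ) else q * y / N * gTerm mu q y (k - 1)) := by
    apply (summable_nat_add_iff 1).mp
    refine (hg.mul_left (q * y / N)).congr fun k => ?_
    simp
  rw [Summable.tsum_add (hFs.mul_left _) (hg.mul_left _), tsum_mul_left, tsum_mul_left]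
  have hSF : (∑' k : ℕ, if k = 0 then (0 : ℝ) else q * y / N * gTerm mu q y (k - 1))
      = q * y / N * ∑' k, gTerm mu q y k := by
    rw [Summable.tsum_eq_zero_add hFs,
      tsum_congr (fun b : ℕ => (by simp :
        (if b + 1 = 0 then (0 : ℝ) else q * y / N * gTerm mu q y (b + 1 - 1))
          = q * y / N * gTerm mu q y b)),
      tsum_mul_left]
    simp
  rw [hSF]

/-- `K̃_{n,q}(t-1; x) = (n/(n+β))(α/n + 1/([2]_q[n]_q) - (n+β)/n) + (2nq/([2]_q(n+β))) x`. -/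
theorem KT_sub_one (n : ℕ) (hn : 0 < n) (q mu α β x : ℝ)
    (hq0 : 0 < q) (hq1 : q < 1) (hmu : 1 / 2 < mu) (hα : 0 ≤ α) (hβ : 0 ≤ β) (hx : 0 ≤ x) :
    KT n q mu α β (fun t => t - 1) x =
      (n : ℝ) / ((n : ℝ) + β) *
          (α / (n : ℝ) + 1 / (qNum q 2 * qNum q (n : ℝ)) - ((n : ℝ) + β) / (n : ℝ))
        + 2 * (n : ℝ) * q / (qNum q 2 * ((n : ℝ) + β)) * x := by
  have hn1 : (1 : ℝ) ≤ (n : ℝ) := by exact_mod_cast hn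
  have hN1 : 1 ≤ qNum q (n : ℝ) := qNum_ge_one hq0 hq1 hn1
  have hN0 : (0 : ℝ) < qNum q (n : ℝ) := lt_of_lt_of_le one_pos hN1
  have hN : qNum q (n : ℝ) ≠ 0 := hN0.ne'
  have hnβ : (0 : ℝ) < (n : ℝ) + β := by linarith
  have hy : 0 ≤ qNum q (n : ℝ) * x := mul_nonneg hN0.le hx
  have hE1 : 1 ≤ ∑' k, gTerm mu q (qNum q (n : ℝ) * x) k := one_le_tsum_gTerm hq0 hq1 hmu hy
  have hE0 : (∑' k, gTerm mu q (qNum q (n : ℝ) * x) k) ≠ 0 := by linarith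
  have hEdef : EDunkl mu q (qNum q (n : ℝ) * x) = ∑' k, gTerm mu q (qNum q (n : ℝ) * x) k := rfl
  have hKT : KT n q mu α β (fun t => t - 1) x
      = qNum q (n : ℝ) / EDunkl mu q (qNum q (n : ℝ) * x) *
        ∑' k : ℕ, (qNum q (n : ℝ) * x) ^ k / gammaD mu q k * q ^ (k * (k - 1) / 2) *
          jacksonInt q (fun t => ((n : ℝ) * t + α) / ((n : ℝ) + β) - 1)
            (lowB q mu n k) (uppB q mu n k) := rfl
  have h1q : (1 : ℝ) + q ≠ 0 := by linarith
  have hJ : ∀ k : ℕ, jacksonInt q (fun t => ((n : ℝ) * t + α) / ((n : ℝ) + β) - 1)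
        (lowB q mu n k) (uppB q mu n k)
      = 2 * ((n : ℝ) / ((n : ℝ) + β)) / ((1 + q) * qNum q (n : ℝ)) * lowB q mu n k
        + ((n : ℝ) / ((n : ℝ) + β) / ((1 + q) * qNum q (n : ℝ) ^ 2)
            + (α / ((n : ℝ) + β) - 1) / qNum q (n : ℝ)) := by
    intro k
    have hfun : (fun t : ℝ => ((n : ℝ) * t + α) / ((n : ℝ) + β) - 1)
        = fun t => ((n : ℝ) / ((n : ℝ) + β)) * t + (α / ((n : ℝ) + β) - 1) := by
      funext t
      field_simp
      ring
    rw [hfun, jackson_affine hq0 hq1, upp_eq hq0 hN hq1 k]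
    field_simp
    ring
  have hT : ∀ k : ℕ, (qNum q (n : ℝ) * x) ^ k / gammaD mu q k * q ^ (k * (k - 1) / 2) *
        jacksonInt q (fun t => ((n : ℝ) * t + α) / ((n : ℝ) + β) - 1)
          (lowB q mu n k) (uppB q mu n k)
      = 2 * ((n : ℝ) / ((n : ℝ) + β)) / ((1 + q) * qNum q (n : ℝ))
          * (if k = 0 then 0 else q * (qNum q (n : ℝ) * x) / qNum q (n : ℝ)
              * gTerm mu q (qNum q (n : ℝ) * x) (k - 1))
        + ((n : ℝ) / ((n : ℝ) + β) / ((1 + q) * qNum q (n : ℝ) ^ 2)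
            + (α / ((n : ℝ) + β) - 1) / qNum q (n : ℝ))
          * gTerm mu q (qNum q (n : ℝ) * x) k := by
    intro k
    rw [hJ k, ← gTerm_mul_lowB hq0 hq1 hmu hN (qNum q (n : ℝ) * x) k]
    unfold gTerm
    ring
  rw [hKT, hEdef, tsum_congr hT, tsum_FC hq0 hq1 hmu hy, qNum_two hq1]
  have hn0 : (n : ℝ) ≠ 0 := by linarith
  field_simp
  ring
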